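/- Let μ ∈ ℝ, σ > 0 with μ² ≤ σ², and let f(x) = (1/√(2πσ²)) exp(−(x−μ)²/(2σ²)). Let p be an even probability density with mean zero such that ∫₀^∞ p(√γ x) dx > 0 for each γ > 0. Then for every γ > 0, ∫ f(x) √γ p(√γ x) dx < f(0). -/

import Mathlib

/-!
For the Gaussian density `f`, `f(x) + f(-x) = 2 f(0) · exp (-x² / (2σ²)) · cosh (xμ / σ²)`, and
`cosh t ≤ exp (t² / 2)` (strictly for `t ≠ 0`) together with `μ² ≤ σ²` makes this strictly smaller
than `2 f(0)` for `x ≠ 0`. Since the rescaled density `√γ p(√γ x)` is even, integrating `f` against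
it only sees the symmetrisation `(f(x) + f(-x)) / 2`, which is at most `f(0)` everywhere and
strictly smaller on `(0, ∞)`, a set of positive mass.
-/

open MeasureTheory Set Real

namespace Real

lemma cosh_lt_exp_half_sq {x : ℝ} (hx : x ≠ 0) : cosh x < exp (x ^ 2 / 2) := by
  rw [cosh_eq_tsum, exp_eq_exp_ℝ, NormedSpace.exp_eq_tsum ℝ]
  refine x.hasSum_cosh.summable.tsum_lt_tsum (i := 2) (fun n ↦ ?_) ?_
    (NormedSpace.expSeries_summable' (𝕂 := ℝ) (x ^ 2 / 2))
  · simp only [div_pow, pow_mul, smul_eq_mul, inv_mul_eq_div, div_div]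
    gcongr
    norm_cast
    exact Nat.two_pow_mul_factorial_le_factorial_two_mul _
  · have hx4 : 0 < x ^ 4 := by positivity
    norm_num [Nat.factorial]
    linarith

lemma cosh_mul_div_sq_lt_exp {μ σ x : ℝ} (hσ : σ ≠ 0) (hμ : μ ^ 2 ≤ σ ^ 2) (hx : x ≠ 0) :
    cosh (x * μ / σ ^ 2) < exp (x ^ 2 / (2 * σ ^ 2)) := by
  rcases eq_or_ne (x * μ / σ ^ 2) 0 with ht | ht
  · rw [ht, cosh_zero, one_lt_exp_iff]
    positivity
  · calc cosh (x * μ / σ ^ 2) < exp ((x * μ / σ ^ 2) ^ 2 / 2) := cosh_lt_exp_half_sq ht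
      _ ≤ exp (x ^ 2 / (2 * σ ^ 2)) := by
        refine exp_le_exp.mpr ?_
        rw [div_pow, mul_pow, div_div, div_le_div_iff₀ (by positivity) (by positivity)]
        have : x ^ 2 * μ ^ 2 * σ ^ 2 ≤ x ^ 2 * σ ^ 2 * σ ^ 2 := by gcongr
        linarith

lemma exp_neg_sub_sq_add_exp_neg_neg_sub_sq {μ σ x : ℝ} (hσ : σ ≠ 0) :
    exp (-(x - μ) ^ 2 / (2 * σ ^ 2)) + exp (-(-x - μ) ^ 2 / (2 * σ ^ 2))
      = 2 * exp (-μ ^ 2 / (2 * σ ^ 2)) * (exp (-x ^ 2 / (2 * σ ^ 2)) * cosh (x * μ / σ ^ 2)) := by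
  have hright : exp (-(x - μ) ^ 2 / (2 * σ ^ 2))
      = exp (-μ ^ 2 / (2 * σ ^ 2)) * exp (-x ^ 2 / (2 * σ ^ 2)) * exp (x * μ / σ ^ 2) := by
    rw [← exp_add, ← exp_add]; congr 1; field_simp; ring
  have hleft : exp (-(-x - μ) ^ 2 / (2 * σ ^ 2))
      = exp (-μ ^ 2 / (2 * σ ^ 2)) * exp (-x ^ 2 / (2 * σ ^ 2)) * exp (-(x * μ / σ ^ 2)) := by
    rw [← exp_add, ← exp_add]; congr 1; field_simp; ring
  rw [hright, hleft, cosh_eq]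
  ring

lemma exp_neg_sub_sq_add_exp_neg_neg_sub_sq_lt {μ σ x : ℝ} (hσ : σ ≠ 0) (hμ : μ ^ 2 ≤ σ ^ 2)
    (hx : x ≠ 0) :
    exp (-(x - μ) ^ 2 / (2 * σ ^ 2)) + exp (-(-x - μ) ^ 2 / (2 * σ ^ 2))
      < 2 * exp (-μ ^ 2 / (2 * σ ^ 2)) := by
  rw [exp_neg_sub_sq_add_exp_neg_neg_sub_sq hσ]
  refine mul_lt_of_lt_one_right (by positivity) ?_
  rw [neg_div, exp_neg, inv_mul_lt_one₀ (exp_pos _)]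
  exact cosh_mul_div_sq_lt_exp hσ hμ hx

end Real

section Symmetrization

variable {G : Type*} [MeasurableSpace G] [AddGroup G] [MeasurableNeg G] {ν : Measure G}
  [ν.IsNegInvariant]

lemma integral_mul_lt_of_symmetrization_lt {f q : G → ℝ} {C : ℝ} {S : Set G}
    (hf : AEStronglyMeasurable f ν) (hfC : ∀ x, ‖f x‖ ≤ C)
    (hq_nonneg : ∀ x, 0 ≤ q x) (hq : Integrable q ν) (hq_one : ∫ x, q x ∂ν = 1)
    (hq_even : ∀ x, q (-x) = q x)
    (hf_le : ∀ x, f x + f (-x) ≤ 2 * f 0) (hf_lt : ∀ x ∈ S, f x + f (-x) < 2 * f 0)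
    (hq_pos : 0 < ∫ x in S, q x ∂ν) :
    ∫ x, f x * q x ∂ν < f 0 := by
  have hfq : Integrable (fun x ↦ f x * q x) ν := hq.bdd_mul hf (ae_of_all _ hfC)
  have hfq_neg : Integrable (fun x ↦ f (-x) * q x) ν := by
    simpa only [hq_even] using hfq.comp_neg
  have hsymm : ∫ x, f (-x) * q x ∂ν = ∫ x, f x * q x ∂ν := by
    simpa only [hq_even] using integral_neg_eq_self (fun x ↦ f x * q x) ν
  set gap : G → ℝ := fun x ↦ 2 * f 0 * q x - f x * q x - f (-x) * q x
  have hfq' : Integrable (fun x ↦ 2 * f 0 * q x - f x * q x) ν := (hq.const_mul _).sub hfq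
  have hgap_int : Integrable gap ν := hfq'.sub hfq_neg
  have hgap_eq : ∫ x, gap x ∂ν = 2 * f 0 - 2 * ∫ x, f x * q x ∂ν := by
    simp only [gap]
    rw [integral_sub hfq' hfq_neg, integral_sub (hq.const_mul _) hfq,
      integral_const_mul, hq_one, hsymm]
    ring
  have hgap_nonneg : ∀ x, 0 ≤ gap x := fun x ↦ by
    nlinarith [hf_le x, hq_nonneg x]
  have hgap_pos : 0 < ∫ x, gap x ∂ν := by
    rw [setIntegral_pos_iff_support_of_nonneg_ae (ae_of_all _ hq_nonneg) hq.integrableOn]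
      at hq_pos
    rw [integral_pos_iff_support_of_nonneg_ae (ae_of_all _ hgap_nonneg) hgap_int]
    refine hq_pos.trans_le (measure_mono fun x ⟨hqx, hxS⟩ ↦ ?_)
    have hqx : 0 < q x := (hq_nonneg x).lt_of_ne' hqx
    exact (show 0 < gap x by nlinarith [hf_lt x hxS]).ne'
  linarith

end Symmetrization

theorem stmt18_general (μ σ : ℝ) (hσ : 0 < σ) (hμ : μ ^ 2 ≤ σ ^ 2) (p : ℝ → ℝ)
    (hnn : ∀ x, 0 ≤ p x) (hint : Integrable p)
    (hprob : ∫ x, p x = 1)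
    (heven : ∀ x, p (-x) = p x)
    (hpos : ∀ γ : ℝ, 0 < γ → 0 < ∫ x in Ioi (0:ℝ), p (Real.sqrt γ * x)) :
    ∀ γ : ℝ, 0 < γ →
      (∫ x, ((1 / Real.sqrt (2 * π * σ ^ 2)) * Real.exp (-(x - μ) ^ 2 / (2 * σ ^ 2)))
          * (Real.sqrt γ * p (Real.sqrt γ * x)))
      < (1 / Real.sqrt (2 * π * σ ^ 2)) * Real.exp (-(0 - μ) ^ 2 / (2 * σ ^ 2)) := by
  intro γ hγ
  set c := 1 / √(2 * π * σ ^ 2)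
  have hc : 0 < c := by positivity
  have hs : 0 < √γ := sqrt_pos.mpr hγ
  have hlt : ∀ x ≠ 0, c * exp (-(x - μ) ^ 2 / (2 * σ ^ 2)) + c * exp (-(-x - μ) ^ 2 / (2 * σ ^ 2))
      < 2 * (c * exp (-(0 - μ) ^ 2 / (2 * σ ^ 2))) := fun x hx ↦ by
    have := mul_lt_mul_of_pos_left (exp_neg_sub_sq_add_exp_neg_neg_sub_sq_lt hσ.ne' hμ hx) hc
    rw [zero_sub, neg_sq]
    linarith
  refine integral_mul_lt_of_symmetrization_lt (C := c) (S := Ioi 0)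
    (by fun_prop) (fun x ↦ ?_) (fun x ↦ mul_nonneg hs.le (hnn _))
    ((hint.comp_mul_left' hs.ne').const_mul _) ?_ (fun x ↦ by simp only [mul_neg, heven])
    (fun x ↦ ?_) (fun x hx ↦ hlt x (ne_of_gt hx)) ?_
  · rw [norm_mul, norm_of_nonneg hc.le, norm_of_nonneg (exp_pos _).le]
    exact mul_le_of_le_one_right hc.le (exp_le_one_iff.mpr
      (div_nonpos_of_nonpos_of_nonneg (neg_nonpos.mpr (sq_nonneg _)) (by positivity)))
  · rw [integral_const_mul, Measure.integral_comp_mul_left, hprob, smul_eq_mul, mul_one,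
      abs_inv, abs_of_pos hs, mul_inv_cancel₀ hs.ne']
  · rcases eq_or_ne x 0 with rfl | hx
    · rw [neg_zero, ← two_mul]
    · exact (hlt x hx).le
  · rw [integral_const_mul]
    exact mul_pos hs (hpos γ hγ)

theorem stmt18 (μ σ : ℝ) (hσ : 0 < σ) (hμ : μ ^ 2 ≤ σ ^ 2) (p : ℝ → ℝ)
    (hnn : ∀ x, 0 ≤ p x) (hint : Integrable p)
    (hprob : ∫ x, p x = 1)
    (heven : ∀ x, p (-x) = p x)
    (hmean : ∫ x, x * p x = 0)
    (hpos : ∀ γ : ℝ, 0 < γ → 0 < ∫ x in Ioi (0:ℝ), p (Real.sqrt γ * x)) :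
    ∀ γ : ℝ, 0 < γ →
      (∫ x, ((1 / Real.sqrt (2 * π * σ ^ 2)) * Real.exp (-(x - μ) ^ 2 / (2 * σ ^ 2)))
          * (Real.sqrt γ * p (Real.sqrt γ * x)))
      < (1 / Real.sqrt (2 * π * σ ^ 2)) * Real.exp (-(0 - μ) ^ 2 / (2 * σ ^ 2)) :=
  stmt18_general μ σ hσ hμ p hnn hint hprob heven hpos
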